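/- arXiv:2310.10451 — 2 statements merged into one kernel-verified Lean document; each statement's English description precedes it below -/
import Mathlib

section
/- For the star-graph quantum walk with M ≥ 2 edges: if the state satisfies ψ⁺ i = α⁺ and ψ⁻ i = α⁻ for all i ≠ 0, then after one step U = S ∘ C ∘ O the new state (ψ'⁺, ψ'⁻) satisfies: ψ'⁺ i = ((M−2)·α⁻ − 2·ψ⁺ 0)/M and ψ'⁻ i = α⁺ for all i ≠ 0; ψ'⁺ 0 = ((2M−2)·α⁻ + (M−2)·ψ⁺ 0)/M; and ψ'⁻ 0 = −ψ⁻ 0. -/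
/-!
Star-graph quantum walk with `M` edges. The walker's state is a pair of vectors
`ψ⁺ ψ⁻ : Fin M → ℂ`; edge `0` is the marked edge. One step is `U = S ∘ C ∘ O` where:
* the oracle `O` maps `(ψ⁺ 0, ψ⁻ 0)` to `(−ψ⁻ 0, −ψ⁺ 0)` and fixes all other entries;
* the coin `C` swaps `ψ⁺ i` and `ψ⁻ i` for every `i`;
* the scattering `S` replaces `ψ⁺` by `D_M · ψ⁺` where `D_M = (2/M) J_M − I_M`, and fixes `ψ⁻`.
-/

/-- One step `U = S ∘ C ∘ O` of the star-graph quantum walk with `M` edges. -/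
noncomputable def starStep (M : ℕ) [NeZero M]
    (ψ : (Fin M → ℂ) × (Fin M → ℂ)) : (Fin M → ℂ) × (Fin M → ℂ) :=
  -- oracle
  let Op : Fin M → ℂ := Function.update ψ.1 0 (-ψ.2 0)
  let Om : Fin M → ℂ := Function.update ψ.2 0 (-ψ.1 0)
  -- coin swaps the two components, then scattering applies `D_M` to the `+` component
  (fun i => ∑ j : Fin M, ((2 / (M : ℂ)) - if i = j then 1 else 0) * Om j, Op)

/-!
After the oracle and the coin, the `+` component equals `-ψ⁺ 0` on the marked edge and the
constant `α⁻` elsewhere. The scattering `D_M = (2/M) J_M - I_M` sends a vector `v` to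
`(2/M) (∑ v) - v`, and here `∑ v = M α⁻ + (-ψ⁺ 0 - α⁻)`.
-/

section Fintype

variable {ι R : Type*} [Fintype ι] [CommRing R]

theorem sum_const_sub_ite_mul [DecidableEq ι] (c : R) (v : ι → R) (i : ι) :
    ∑ j, (c - if i = j then 1 else 0) * v j = c * ∑ j, v j - v i := by
  simp only [sub_mul, Finset.sum_sub_distrib, ← Finset.mul_sum, ite_mul, one_mul, zero_mul,
    Finset.sum_ite_eq, Finset.mem_univ, if_true]

theorem sum_update_eq_of_forall_ne [DecidableEq ι] {v : ι → R} {i₀ : ι} {a : R}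
    (hv : ∀ i, i ≠ i₀ → v i = a) (b : R) :
    ∑ j, Function.update v i₀ b j = Fintype.card ι * a + (b - a) := by
  have hsplit : Function.update v i₀ b = fun j => a + (Pi.single i₀ (b - a) : ι → R) j := by
    funext j
    rcases eq_or_ne j i₀ with rfl | hj
    · simp
    · simp [hj, hv j hj]
  simp [hsplit, Finset.sum_add_distrib]

end Fintype

section StarStep

variable (M : ℕ) [NeZero M] (ψ : (Fin M → ℂ) × (Fin M → ℂ))

theorem starStep_fst_apply (i : Fin M) :
    (starStep M ψ).1 i = 2 / (M : ℂ) * ∑ j, Function.update ψ.2 0 (-ψ.1 0) j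
      - Function.update ψ.2 0 (-ψ.1 0) i :=
  sum_const_sub_ite_mul _ _ i

theorem starStep_snd : (starStep M ψ).2 = Function.update ψ.1 0 (-ψ.2 0) := rfl

end StarStep

theorem starStep_symmetric_formulas_general
    (M : ℕ) [NeZero M] (ψp ψm : Fin M → ℂ) (αp αm : ℂ)
    (h : ∀ i : Fin M, i ≠ 0 → ψp i = αp ∧ ψm i = αm) :
    (∀ i : Fin M, i ≠ 0 →
        (starStep M (ψp, ψm)).1 i = (((M : ℂ) - 2) * αm - 2 * ψp 0) / M ∧
        (starStep M (ψp, ψm)).2 i = αp) ∧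
      (starStep M (ψp, ψm)).1 0 = ((2 * (M : ℂ) - 2) * αm + ((M : ℂ) - 2) * ψp 0) / M ∧
      (starStep M (ψp, ψm)).2 0 = -ψm 0 := by
  have hM : (M : ℂ) ≠ 0 := Nat.cast_ne_zero.mpr (NeZero.ne M)
  have hsum : ∑ j, Function.update ψm 0 (-ψp 0) j = M * αm + (-ψp 0 - αm) := by
    simpa using sum_update_eq_of_forall_ne (fun i hi => (h i hi).2) (-ψp 0)
  simp only [starStep_fst_apply, starStep_snd, hsum, Function.update_self]
  refine ⟨fun i hi => ?_, ?_, trivial⟩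
  · rw [Function.update_of_ne hi, Function.update_of_ne hi, (h i hi).1, (h i hi).2]
    refine ⟨?_, rfl⟩
    field_simp
    ring
  · field_simp
    ring

/-- Explicit formulas for one step of the star-graph walk on a symmetric state:
if `ψ⁺ i = α⁺` and `ψ⁻ i = α⁻` for all `i ≠ 0`, then after one step
`ψ'⁺ i = ((M−2)α⁻ − 2 ψ⁺ 0)/M` and `ψ'⁻ i = α⁺` for `i ≠ 0`,
`ψ'⁺ 0 = ((2M−2)α⁻ + (M−2) ψ⁺ 0)/M`, and `ψ'⁻ 0 = −ψ⁻ 0`. -/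
theorem starStep_symmetric_formulas
    (M : ℕ) [NeZero M] (hM : 2 ≤ M) (ψp ψm : Fin M → ℂ) (αp αm : ℂ)
    (h : ∀ i : Fin M, i ≠ 0 → ψp i = αp ∧ ψm i = αm) :
    (∀ i : Fin M, i ≠ 0 →
        (starStep M (ψp, ψm)).1 i = (((M : ℂ) - 2) * αm - 2 * ψp 0) / M ∧
        (starStep M (ψp, ψm)).2 i = αp) ∧
      (starStep M (ψp, ψm)).1 0 = ((2 * (M : ℂ) - 2) * αm + ((M : ℂ) - 2) * ψp 0) / M ∧
      (starStep M (ψp, ψm)).2 0 = -ψm 0 :=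
  starStep_symmetric_formulas_general M ψp ψm αp αm h
end

section
/- For the star-graph quantum walk with M ≥ 2 edges started in the diagonal initial state, the full dynamics reduces to the 3-dimensional linear system: for every t ∈ ℕ, the state (ψ⁺(t), ψ⁻(t)) = U^t (diagonal state) satisfies ψ⁺ i (t) = (A^t X₀)₁ and ψ⁻ i (t) = (A^t X₀)₂ for every i ≠ 0, and ψ⁺ 0 (t) = (A^t X₀)₃. -/
noncomputable def starInit (M : ℕ) : (Fin M → ℂ) × (Fin M → ℂ) :=
  (fun _ => ((1 / Real.sqrt (2 * M) : ℝ) : ℂ), fun _ => ((1 / Real.sqrt (2 * M) : ℝ) : ℂ))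

noncomputable def starA (M : ℕ) : Matrix (Fin 3) (Fin 3) ℂ :=
  !![0, ((M : ℂ) - 2) / M, -2 / M;
     1, 0, 0;
     0, 2 * ((M : ℂ) - 1) / M, ((M : ℂ) - 2) / M]

noncomputable def starX0 (M : ℕ) : Fin 3 → ℂ :=
  fun _ => ((1 / Real.sqrt (2 * M) : ℝ) : ℂ)

open Finset Matrix

theorem Finset.sum_sub_ite_mul {ι R : Type*} [Fintype ι] [DecidableEq ι] [CommRing R]
    (c : R) (v : ι → R) (i : ι) :
    ∑ j, (c - if i = j then 1 else 0) * v j = c * ∑ j, v j - v i := by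
  simp [sub_mul, sum_sub_distrib, mul_sum, ite_mul]

theorem Finset.sum_ite_eq_else_const {ι R : Type*} [Fintype ι] [DecidableEq ι] [CommRing R]
    (i : ι) (a b : R) :
    ∑ j, (if j = i then a else b) = a + ((Fintype.card ι : R) - 1) * b := by
  rw [← add_sum_erase _ _ (mem_univ i), if_pos rfl,
    sum_congr rfl fun j hj => if_neg (ne_of_mem_erase hj)]
  simp [card_erase_of_mem, Nat.cast_sub (Fintype.card_pos_iff.mpr ⟨i⟩)]

theorem starA_mulVec (M : ℕ) (X : Fin 3 → ℂ) :
    starA M *ᵥ X = ![((M : ℂ) - 2) / M * X 1 - 2 / M * X 2, X 0,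
      2 * ((M : ℂ) - 1) / M * X 1 + ((M : ℂ) - 2) / M * X 2] := by
  ext k
  fin_cases k <;> simp [starA, mulVec, dotProduct, Fin.sum_univ_three, sub_eq_add_neg, neg_div]

/-- `X = (ψ⁺ j, ψ⁻ j, ψ⁺ 0)` for the unmarked edges `j ≠ 0`, and `d = ψ⁻ 0`. -/
def starState (M : ℕ) [NeZero M] (X : Fin 3 → ℂ) (d : ℂ) : (Fin M → ℂ) × (Fin M → ℂ) :=
  (fun i => if i = 0 then X 2 else X 0, fun i => if i = 0 then d else X 1)

theorem starStep_starState (M : ℕ) [NeZero M] (X : Fin 3 → ℂ) (d : ℂ) :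
    starStep M (starState M X d) = starState M (starA M *ᵥ X) (-d) := by
  have hM : (M : ℂ) ≠ 0 := Nat.cast_ne_zero.mpr (NeZero.ne M)
  have hOm : Function.update (starState M X d).2 0 (-(starState M X d).1 0) =
      fun j => if j = 0 then -X 2 else X 1 := by
    ext j
    by_cases hj : j = 0 <;> simp [starState, hj]
  simp only [starStep, hOm, sum_sub_ite_mul, sum_ite_eq_else_const, Fintype.card_fin,
    starA_mulVec]
  ext i <;> by_cases hi : i = 0 <;> simp [starState, hi]
  all_goals field_simp; ring

theorem iterate_starStep_starState (M : ℕ) [NeZero M] (X : Fin 3 → ℂ) (d : ℂ) (t : ℕ) :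
    (starStep M)^[t] (starState M X d) = starState M (starA M ^ t *ᵥ X) ((-1) ^ t * d) := by
  induction t with
  | zero => simp
  | succ t ih =>
    rw [Function.iterate_succ_apply', ih, starStep_starState, mulVec_mulVec, ← pow_succ',
      pow_succ' (-1 : ℂ), neg_one_mul, neg_mul]

theorem starInit_eq_starState (M : ℕ) [NeZero M] :
    starInit M = starState M (starX0 M) ((1 / Real.sqrt (2 * M) : ℝ) : ℂ) := by
  ext i <;> simp [starInit, starX0, starState]

theorem starWalk_reduces_to_linear_system_general (M : ℕ) [NeZero M] (t : ℕ) :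
    (∀ i : Fin M, i ≠ 0 →
        ((starStep M)^[t] (starInit M)).1 i = ((starA M ^ t).mulVec (starX0 M)) 0 ∧
        ((starStep M)^[t] (starInit M)).2 i = ((starA M ^ t).mulVec (starX0 M)) 1) ∧
      ((starStep M)^[t] (starInit M)).1 0 = ((starA M ^ t).mulVec (starX0 M)) 2 := by
  rw [starInit_eq_starState, iterate_starStep_starState]
  exact ⟨fun i hi => by simp [starState, hi], by simp [starState]⟩

/-- The star-graph walk started in the diagonal state reduces to the 3-dimensional linear
system `X_{t+1} = A X_t`: at every time `t`, the common value of `ψ⁺` away from the marked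
edge is `(A^t X₀)₁`, the common value of `ψ⁻` away from the marked edge is `(A^t X₀)₂`, and
the marked-edge amplitude `ψ⁺ 0` is `(A^t X₀)₃`. -/
theorem starWalk_reduces_to_linear_system (M : ℕ) [NeZero M] (hM : 2 ≤ M) (t : ℕ) :
    (∀ i : Fin M, i ≠ 0 →
        ((starStep M)^[t] (starInit M)).1 i = ((starA M ^ t).mulVec (starX0 M)) 0 ∧
        ((starStep M)^[t] (starInit M)).2 i = ((starA M ^ t).mulVec (starX0 M)) 1) ∧
      ((starStep M)^[t] (starInit M)).1 0 = ((starA M ^ t).mulVec (starX0 M)) 2 :=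
  starWalk_reduces_to_linear_system_general M t
end
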